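/- arXiv:1811.03996 — 5 statements merged into one kernel-verified Lean document; each statement's English description precedes it below -/
import Mathlib

section
/- Let n divide m, let F be the m×m normalized DFT matrix, P = {m/n, 2m/n, …, m}, and Q = {l+1, …, l+n} (interpreted circularly mod m) for some l. Then ‖D_P F D_Q F*‖_{2→2} = √(n/m). -/
open scoped BigOperators Matrix Classical

noncomputable def vnorm2 {m : ℕ} (x : Fin m → ℂ) : ℝ :=
  Real.sqrt (∑ i, ‖x i‖ ^ 2)

noncomputable def vnorm1 {m : ℕ} (x : Fin m → ℂ) : ℝ :=
  ∑ i, ‖x i‖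

noncomputable def opnorm2 {m n : ℕ} (A : Matrix (Fin m) (Fin n) ℂ) : ℝ :=
  sSup {c | ∃ x : Fin n → ℂ, vnorm2 x = 1 ∧ c = vnorm2 (A.mulVec x)}

noncomputable def opnorm1 {m n : ℕ} (A : Matrix (Fin m) (Fin n) ℂ) : ℝ :=
  sSup {c | ∃ x : Fin n → ℂ, vnorm1 x = 1 ∧ c = vnorm1 (A.mulVec x)}

noncomputable def frobNorm {m n : ℕ} (A : Matrix (Fin m) (Fin n) ℂ) : ℝ :=
  Real.sqrt (∑ i, ∑ j, ‖A i j‖ ^ 2)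

def Dmat {m : ℕ} (P : Finset (Fin m)) : Matrix (Fin m) (Fin m) ℂ :=
  Matrix.diagonal (fun i => if i ∈ P then 1 else 0)

noncomputable def dft (m : ℕ) : Matrix (Fin m) (Fin m) ℂ :=
  fun k l => (1 / Real.sqrt m : ℝ) *
    Complex.exp (-2 * Real.pi * Complex.I * (k.1 + 1) * (l.1 + 1) / m)

/-!
Write `F` for the DFT matrix and `m = n d`. Entrywise, `Fᴴ D_P F` is a character sum over
`P = {d, 2d, …, nd}`, i.e. over the subgroup of order `n`; it equals `n/m` on pairs of indices that
are congruent mod `n` and vanishes elsewhere. The `n` consecutive residues in `Q` are pairwise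
incongruent mod `n`, so `D_Q Fᴴ D_P F D_Q = (n/m) D_Q`. For `A = D_P F D_Q Fᴴ` this gives
`Aᴴ A = (n/m) F D_Q Fᴴ`, and the C*-identity `‖A‖² = ‖Aᴴ A‖` together with `‖F D_Q Fᴴ‖ = ‖D_Q‖ = 1`
(`F` is unitary, `D_Q` a nonzero projection) yields `‖A‖ = √(n/m)`.
-/

open scoped Matrix.Norms.L2Operator

lemma IsPrimitiveRoot.sum_zpow_succ_mul {K : Type*} [Field K] {ω : K} {N : ℕ}
    (hω : IsPrimitiveRoot ω N) (r : ℤ) :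
    ∑ a : Fin N, ω ^ (((a : ℤ) + 1) * r) = if (N : ℤ) ∣ r then (N : K) else 0 := by
  have hpow : ∀ a : Fin N, ω ^ (((a : ℤ) + 1) * r) = (ω ^ r) ^ ((a : ℕ) + 1) := by
    intro a
    rw [mul_comm, zpow_mul, ← zpow_natCast]
    push_cast; rfl
  simp only [hpow, Fin.sum_univ_eq_sum_range (fun a => (ω ^ r) ^ (a + 1))]
  split_ifs with hr
  · simp [(hω.zpow_eq_one_iff_dvd r).mpr hr]
  · have hne : ω ^ r - 1 ≠ 0 := sub_ne_zero.mpr fun h => hr ((hω.zpow_eq_one_iff_dvd r).mp h)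
    have hN : (ω ^ r) ^ N = 1 := by
      rw [← zpow_natCast, ← zpow_mul, mul_comm, zpow_mul, zpow_natCast, hω.pow_eq_one, one_zpow]
    simp only [pow_succ', ← Finset.mul_sum]
    rw [← mul_div_cancel_right₀ (∑ i ∈ Finset.range N, (ω ^ r) ^ i) hne, geom_sum_mul, hN]
    simp

lemma IsStarProjection.norm_eq_one {E : Type*} [NormedRing E] [StarRing E] [CStarRing E]
    {e : E} (he : IsStarProjection e) (h0 : e ≠ 0) : ‖e‖ = 1 := by
  have h : ‖e‖ * ‖e‖ = ‖e‖ * 1 := by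
    rw [← CStarRing.norm_star_mul_self, he.isSelfAdjoint.star_eq, he.isIdempotentElem.eq, mul_one]
  exact mul_left_cancel₀ (norm_ne_zero_iff.mpr h0) h

lemma Fin.natCast_dvd_sub_iff {m : ℕ} (t t' : Fin m) : (m : ℤ) ∣ (t' : ℤ) - t ↔ t = t' := by
  rw [← Nat.modEq_iff_dvd, Fin.ext_iff]
  exact ⟨fun h => h.eq_of_lt_of_lt t.2 t'.2, fun h => h ▸ Nat.ModEq.refl _⟩

lemma Fin.sum_filter_dvd_succ {M : Type*} [AddCommMonoid M] {n d : ℕ} (hd : 0 < d)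
    (f : ℕ → M) :
    ∑ i ∈ Finset.univ.filter (fun i : Fin (n * d) => d ∣ i.1 + 1), f (i.1 + 1) =
      ∑ a : Fin n, f (((a : ℕ) + 1) * d) := by
  have hpos : ∀ a : ℕ, 1 ≤ (a + 1) * d := fun a => Nat.one_le_iff_ne_zero.mpr (by positivity)
  symm
  refine Finset.sum_bij (fun a _ => ⟨((a : ℕ) + 1) * d - 1, ?_⟩) ?_ ?_ ?_ ?_
  · have : ((a : ℕ) + 1) * d ≤ n * d := Nat.mul_le_mul_right d (Nat.succ_le_of_lt a.2)
    have := hpos a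
    omega
  · intro a _
    simp only [Finset.mem_filter, Finset.mem_univ, true_and, Nat.sub_add_cancel (hpos a)]
    exact dvd_mul_left d _
  · intro a _ b _ hab
    simp only [Fin.mk.injEq] at hab
    have := hpos a
    have := hpos b
    exact Fin.ext <| Nat.succ_injective <| Nat.eq_of_mul_eq_mul_right hd
      (by omega : ((a : ℕ) + 1) * d = ((b : ℕ) + 1) * d)
  · intro i hi
    obtain ⟨c, hc⟩ := (Finset.mem_filter.mp hi).2
    have hc0 : c ≠ 0 := by rintro rfl; simp at hc
    have hcn : c ≤ n := by
      have : d * c ≤ d * n := by rw [← hc, mul_comm d n]; exact i.2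
      exact Nat.le_of_mul_le_mul_left this hd
    refine ⟨⟨c - 1, by omega⟩, Finset.mem_univ _, Fin.ext ?_⟩
    simp only [Nat.sub_add_cancel (Nat.one_le_iff_ne_zero.mpr hc0), mul_comm c, ← hc]
    omega
  · intro a _
    simp only [Nat.sub_add_cancel (hpos a)]

lemma Fin.eq_of_modEq_of_mem_window {m n l : ℕ} (hnm : n ∣ m) {t t' : Fin m}
    (ht : ∃ k ∈ Finset.Icc 1 n, (t.1 + 1) % m = (l + k) % m)
    (ht' : ∃ k ∈ Finset.Icc 1 n, (t'.1 + 1) % m = (l + k) % m)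
    (h : t.1 ≡ t'.1 [MOD n]) : t = t' := by
  obtain ⟨k, hk, e⟩ := ht
  obtain ⟨k', hk', e'⟩ := ht'
  rw [Finset.mem_Icc] at hk hk'
  have e : t.1 + 1 ≡ l + k [MOD m] := e
  have e' : t'.1 + 1 ≡ l + k' [MOD m] := e'
  have hkk : k = k' := by
    have : l + k ≡ l + k' [MOD n] :=
      ((e.of_dvd hnm).symm.trans (h.add_right 1)).trans (e'.of_dvd hnm)
    refine (Nat.ModEq.add_left_cancel' l this).eq_of_abs_lt ?_
    rw [abs_lt]
    omega
  subst hkk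
  exact Fin.ext (Nat.ModEq.add_right_cancel' 1 (e.trans e'.symm) |>.eq_of_lt_of_lt t.2 t'.2)

lemma vnorm2_eq_norm_toLp {m : ℕ} (x : Fin m → ℂ) : vnorm2 x = ‖WithLp.toLp 2 x‖ := by
  rw [vnorm2, EuclideanSpace.norm_eq]

lemma opnorm2_eq_l2_opNorm {m n : ℕ} (A : Matrix (Fin m) (Fin n) ℂ) : opnorm2 A = ‖A‖ := by
  rw [Matrix.l2_opNorm_def, ← ContinuousLinearMap.sSup_sphere_eq_norm, opnorm2]
  congr 1
  ext c
  simp only [LinearEquiv.trans_apply, LinearMap.coe_toContinuousLinearMap',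
    Matrix.toLpLin_apply, Set.mem_image, mem_sphere_zero_iff_norm, vnorm2_eq_norm_toLp]
  constructor
  · rintro ⟨x, hx, rfl⟩
    exact ⟨WithLp.toLp 2 x, hx, rfl⟩
  · rintro ⟨x, hx, rfl⟩
    exact ⟨x.ofLp, hx, rfl⟩

lemma Dmat_conjTranspose {m : ℕ} (P : Finset (Fin m)) : (Dmat P)ᴴ = Dmat P := by
  rw [Dmat, Matrix.diagonal_conjTranspose]
  congr 1
  ext i
  by_cases hi : i ∈ P <;> simp [hi]

lemma isStarProjection_Dmat {m : ℕ} (P : Finset (Fin m)) : IsStarProjection (Dmat P) where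
  isIdempotentElem := by
    rw [IsIdempotentElem, Dmat, Matrix.diagonal_mul_diagonal]
    congr 1
    ext i
    by_cases hi : i ∈ P <;> simp [hi]
  isSelfAdjoint := Dmat_conjTranspose P

lemma Dmat_ne_zero {m : ℕ} {P : Finset (Fin m)} {i : Fin m} (hi : i ∈ P) : Dmat P ≠ 0 := by
  intro h
  simpa [Dmat, hi] using congrFun (congrFun h i) i

lemma conjTranspose_Dmat_mul_conj_mul_self {m : ℕ} (P Q : Finset (Fin m))
    (F : Matrix (Fin m) (Fin m) ℂ) :
    (Dmat P * (F * Dmat Q * Fᴴ))ᴴ * (Dmat P * (F * Dmat Q * Fᴴ)) =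
      F * (Dmat Q * (Fᴴ * Dmat P * F) * Dmat Q) * Fᴴ := by
  calc _ = F * (Dmat Q * (Fᴴ * (Dmat P * Dmat P) * F) * Dmat Q) * Fᴴ := by
        simp only [Matrix.conjTranspose_mul, Dmat_conjTranspose,
          Matrix.conjTranspose_conjTranspose, Matrix.mul_assoc]
    _ = _ := by rw [(isStarProjection_Dmat P).isIdempotentElem.eq]

lemma isPrimitiveRoot_exp_neg {m : ℕ} (hm : m ≠ 0) :
    IsPrimitiveRoot (Complex.exp (-2 * Real.pi * Complex.I / m)) m := by
  have := (Complex.isPrimitiveRoot_exp m hm).inv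
  rwa [← Complex.exp_neg, ← neg_div, ← neg_mul, ← neg_mul] at this

lemma dft_apply_eq_pow (m : ℕ) (k l : Fin m) :
    dft m k l = (1 / Real.sqrt m : ℝ) *
      Complex.exp (-2 * Real.pi * Complex.I / m) ^ (((k : ℕ) + 1) * ((l : ℕ) + 1)) := by
  rw [dft, ← Complex.exp_nat_mul]
  push_cast
  ring_nf

lemma star_dft_mul_dft {m : ℕ} (hm : m ≠ 0) (k t t' : Fin m) :
    star (dft m k t) * dft m k t' =
      (1 / m : ℂ) *
        Complex.exp (-2 * Real.pi * Complex.I / m) ^ (((k : ℤ) + 1) * ((t' : ℤ) - t)) := by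
  set ζ := Complex.exp (-2 * Real.pi * Complex.I / m)
  have hζ : ‖ζ‖ = 1 := (isPrimitiveRoot_exp_neg hm).norm'_eq_one hm
  have hstar : star (ζ ^ (((k : ℕ) + 1) * ((t : ℕ) + 1))) =
      (ζ ^ (((k : ℕ) + 1) * ((t : ℕ) + 1)))⁻¹ :=
    (Complex.inv_eq_conj (by rw [norm_pow, hζ, one_pow])).symm
  have hscale : star ((1 / Real.sqrt m : ℝ) : ℂ) * ((1 / Real.sqrt m : ℝ) : ℂ) = 1 / m := by
    rw [Complex.star_def, Complex.conj_ofReal, ← Complex.ofReal_mul, div_mul_div_comm, one_mul,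
      Real.mul_self_sqrt (Nat.cast_nonneg m)]
    push_cast; rfl
  rw [dft_apply_eq_pow, dft_apply_eq_pow, star_mul', hstar, mul_mul_mul_comm, hscale,
    ← zpow_natCast, ← zpow_natCast, ← zpow_neg, ← zpow_add₀ (Complex.exp_ne_zero _)]
  congr 2
  push_cast
  ring

lemma dft_conjTranspose_mul_self {m : ℕ} : (dft m)ᴴ * dft m = 1 := by
  rcases Nat.eq_zero_or_pos m with rfl | hm
  · exact Subsingleton.elim _ _
  ext t t'
  simp only [Matrix.mul_apply, Matrix.conjTranspose_apply, star_dft_mul_dft hm.ne',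
    ← Finset.mul_sum, (isPrimitiveRoot_exp_neg hm.ne').sum_zpow_succ_mul,
    Fin.natCast_dvd_sub_iff, Matrix.one_apply]
  split_ifs
  · exact one_div_mul_cancel (Nat.cast_ne_zero.mpr hm.ne')
  · exact mul_zero _

lemma dft_mem_unitaryGroup (m : ℕ) : dft m ∈ Matrix.unitaryGroup (Fin m) ℂ :=
  Matrix.mem_unitaryGroup_iff'.mpr dft_conjTranspose_mul_self

lemma dft_conjTranspose_mul_Dmat_mul_dft_apply {n d : ℕ} (hn : 0 < n) (hd : 0 < d)
    (t t' : Fin (n * d)) :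
    ((dft (n * d))ᴴ * Dmat (Finset.univ.filter (fun i : Fin (n * d) => d ∣ i.1 + 1)) *
      dft (n * d)) t t' = if (n : ℤ) ∣ (t' : ℤ) - t then (n / (n * d : ℕ) : ℂ) else 0 := by
  have hm : n * d ≠ 0 := by positivity
  set ζ := Complex.exp (-2 * Real.pi * Complex.I / (n * d : ℕ)) with hζ
  have hζd : IsPrimitiveRoot (ζ ^ d) n :=
    (isPrimitiveRoot_exp_neg hm).pow hm.bot_lt (mul_comm n d)
  rw [Matrix.mul_apply]
  simp only [Dmat, Matrix.mul_diagonal, Matrix.conjTranspose_apply, mul_ite, mul_one, mul_zero,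
    ite_mul, zero_mul, ← Finset.sum_filter, star_dft_mul_dft hm, ← hζ]
  have hP := Fin.sum_filter_dvd_succ (n := n) hd
    (fun j : ℕ => (1 / (n * d : ℕ) : ℂ) * ζ ^ ((j : ℤ) * ((t' : ℤ) - t)))
  simp only [Nat.cast_succ] at hP
  rw [Finset.filter_mem_eq_inter, Finset.univ_inter, hP, ← Finset.mul_sum]
  have hsub : ∀ a : Fin n, ζ ^ ((((a : ℕ) + 1) * d : ℕ) * ((t' : ℤ) - t)) =
      (ζ ^ d) ^ (((a : ℤ) + 1) * ((t' : ℤ) - t)) := by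
    intro a
    rw [← zpow_natCast, ← zpow_mul]
    push_cast
    ring_nf
  simp only [hsub, hζd.sum_zpow_succ_mul, mul_ite, mul_zero, one_div_mul_eq_div]

lemma Dmat_mul_dft_conjTranspose_mul_Dmat_mul_dft_mul_Dmat {n d : ℕ} (hn : 0 < n) (hd : 0 < d)
    {Q : Finset (Fin (n * d))} (hQ : ∀ t ∈ Q, ∀ t' ∈ Q, t.1 ≡ t'.1 [MOD n] → t = t') :
    Dmat Q * ((dft (n * d))ᴴ * Dmat (Finset.univ.filter (fun i : Fin (n * d) => d ∣ i.1 + 1)) *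
      dft (n * d)) * Dmat Q = ((n : ℂ) / (n * d : ℕ)) • Dmat Q := by
  ext t t'
  rw [Dmat, Matrix.mul_diagonal, Matrix.diagonal_mul,
    dft_conjTranspose_mul_Dmat_mul_dft_apply hn hd, Matrix.smul_apply, Matrix.diagonal_apply,
    smul_eq_mul]
  by_cases htt : t = t'
  · subst htt
    by_cases ht : t ∈ Q <;> simp [ht]
  · have : ¬ (t ∈ Q ∧ t' ∈ Q ∧ (n : ℤ) ∣ (t' : ℤ) - t) := fun ⟨ht, ht', hdvd⟩ =>
      htt (hQ t ht t' ht' (Nat.modEq_iff_dvd.mpr hdvd))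
    simp only [htt, if_false, mul_zero]
    split_ifs <;> simp_all

theorem stmt5 {m n : ℕ} (hm : 0 < m) (hn : 0 < n) (hnm : n ∣ m) (l : ℕ)
    (P : Finset (Fin m)) (hP : P = Finset.univ.filter (fun i : Fin m => (m / n) ∣ (i.1 + 1)))
    (Q : Finset (Fin m))
    (hQ : Q = Finset.univ.filter
      (fun i : Fin m => ∃ k ∈ Finset.Icc 1 n, (i.1 + 1) % m = (l + k) % m)) :
    opnorm2 (Dmat P * (dft m * Dmat Q * (dft m)ᴴ)) = Real.sqrt ((n : ℝ) / m) := by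
  obtain ⟨d, rfl⟩ := hnm
  rw [Nat.mul_div_cancel_left d hn] at hP
  subst hP
  have hQmem : ∀ t ∈ Q, ∃ k ∈ Finset.Icc 1 n, (t.1 + 1) % (n * d) = (l + k) % (n * d) := by
    intro t ht
    simpa [hQ] using ht
  have hQ0 : Dmat Q ≠ 0 := by
    refine Dmat_ne_zero (i := ⟨l % (n * d), Nat.mod_lt _ hm⟩) ?_
    simp only [hQ, Finset.mem_filter, Finset.mem_univ, true_and]
    exact ⟨1, by simp [Nat.one_le_iff_ne_zero, hn.ne'], Nat.mod_add_mod l _ 1⟩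
  have hgram := Dmat_mul_dft_conjTranspose_mul_Dmat_mul_dft_mul_Dmat hn
    (Nat.pos_of_mul_pos_left hm) fun t ht t' ht' =>
      Fin.eq_of_modEq_of_mem_window (Dvd.intro d rfl) (hQmem t ht) (hQmem t' ht')
  have hF : dft (n * d) ∈ unitary _ := dft_mem_unitaryGroup (n * d)
  have hproj : ‖dft (n * d) * Dmat Q * (dft (n * d))ᴴ‖ = 1 := by
    rw [← Matrix.star_eq_conjTranspose, CStarRing.norm_mul_mem_unitary _ (Unitary.star_mem hF),
      CStarRing.norm_mem_unitary_mul _ hF, (isStarProjection_Dmat Q).norm_eq_one hQ0]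
  rw [opnorm2_eq_l2_opNorm, eq_comm, Real.sqrt_eq_iff_mul_self_eq (by positivity) (norm_nonneg _),
    ← Matrix.l2_opNorm_conjTranspose_mul_self, conjTranspose_Dmat_mul_conj_mul_self, hgram,
    Matrix.mul_smul, Matrix.smul_mul, norm_smul, hproj, mul_one, norm_div, Complex.norm_natCast,
    Complex.norm_natCast]
end

section
/- Let A, B ∈ ℂ^{m×m} be unitary, P, Q ⊆ {1,…,m}, and ε_P, ε_Q ∈ [0,1]. If there exist nonzero p, q ∈ ℂ^m with A p = B q, ‖p − D_P p‖₂ ≤ ε_P ‖p‖₂, and ‖q − D_Q q‖₂ ≤ ε_Q ‖q‖₂, then |P|·|Q| ≥ max(1 − ε_P − ε_Q, 0)² / μ², where μ = max_{i,j} |(A* B)_{i,j}|. -/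
open scoped BigOperators Matrix

/-!
Let `M = Aᴴ B`: it is unitary with entries bounded by `μ`, `p = M q` and `‖p‖ = ‖q‖`.
Splitting `p = D_P M D_Q q + D_P M (q - D_Q q) + (p - D_P p)` gives
`‖p‖ ≤ ‖D_P M D_Q q‖ + (ε_Q + ε_P) ‖p‖`. Each entry of `M D_Q q` is at most
`μ ∑_{j ∈ Q} |q_j| ≤ μ √|Q| ‖q‖`, hence `‖D_P M D_Q q‖ ≤ μ √|P| √|Q| ‖q‖`, and dividing
by `‖p‖` gives `1 - ε_P - ε_Q ≤ μ √(|P| |Q|)`.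
-/

section Vnorm2

variable {m : ℕ}

lemma vnorm2_eq_norm (x : Fin m → ℂ) :
    vnorm2 x = ‖(WithLp.toLp 2 x : EuclideanSpace ℂ (Fin m))‖ := by
  rw [EuclideanSpace.norm_eq]
  rfl

lemma vnorm2_pos {x : Fin m → ℂ} (hx : x ≠ 0) : 0 < vnorm2 x := by
  rw [vnorm2_eq_norm, norm_pos_iff]
  exact fun h => hx (congrArg WithLp.ofLp h)

lemma vnorm2_add_le (x y : Fin m → ℂ) : vnorm2 (x + y) ≤ vnorm2 x + vnorm2 y := by
  simp only [vnorm2_eq_norm, WithLp.toLp_add]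
  exact norm_add_le _ _

lemma vnorm2_unitary_mulVec {U : Matrix (Fin m) (Fin m) ℂ}
    (hU : U ∈ Matrix.unitaryGroup (Fin m) ℂ) (x : Fin m → ℂ) :
    vnorm2 (U *ᵥ x) = vnorm2 x := by
  simp only [vnorm2_eq_norm, ← Matrix.toEuclideanCLM_toLp]
  exact ContinuousLinearMap.norm_map_of_mem_unitary (Unitary.map_mem _ hU) _

lemma sum_norm_le_sqrt_card_mul_vnorm2 (s : Finset (Fin m)) (x : Fin m → ℂ) :
    ∑ i ∈ s, ‖x i‖ ≤ √(s.card : ℝ) * vnorm2 x := by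
  have h_sub : ∑ i ∈ s, ‖x i‖ ^ 2 ≤ ∑ i, ‖x i‖ ^ 2 :=
    Finset.sum_le_univ_sum_of_nonneg fun _ => sq_nonneg _
  calc ∑ i ∈ s, ‖x i‖
      ≤ √(s.card * ∑ i ∈ s, ‖x i‖ ^ 2) :=
        (le_abs_self _).trans (Real.abs_le_sqrt sq_sum_le_card_mul_sum_sq)
    _ ≤ √(s.card * ∑ i, ‖x i‖ ^ 2) := by gcongr
    _ = √(s.card : ℝ) * vnorm2 x := Real.sqrt_mul (Nat.cast_nonneg _) _

end Vnorm2

section Dmat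

variable {m : ℕ}

lemma Dmat_mulVec_apply (P : Finset (Fin m)) (x : Fin m → ℂ) (i : Fin m) :
    (Dmat P *ᵥ x) i = if i ∈ P then x i else 0 := by
  rw [Dmat, Matrix.mulVec_diagonal]
  split_ifs <;> simp

lemma vnorm2_Dmat_mulVec (P : Finset (Fin m)) (x : Fin m → ℂ) :
    vnorm2 (Dmat P *ᵥ x) = √(∑ i ∈ P, ‖x i‖ ^ 2) := by
  have h (i : Fin m) : ‖(Dmat P *ᵥ x) i‖ ^ 2 = if i ∈ P then ‖x i‖ ^ 2 else 0 := by
    rw [Dmat_mulVec_apply]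
    split_ifs <;> simp
  rw [vnorm2, Finset.sum_congr rfl fun i _ => h i, Finset.sum_ite_mem, Finset.univ_inter]

lemma vnorm2_Dmat_mulVec_le (P : Finset (Fin m)) (x : Fin m → ℂ) :
    vnorm2 (Dmat P *ᵥ x) ≤ vnorm2 x := by
  rw [vnorm2_Dmat_mulVec]
  exact Real.sqrt_le_sqrt (Finset.sum_le_univ_sum_of_nonneg fun _ => sq_nonneg _)

lemma vnorm2_Dmat_mulVec_le_of_norm_le (P : Finset (Fin m)) {x : Fin m → ℂ} {C : ℝ}
    (hC : 0 ≤ C) (hx : ∀ i ∈ P, ‖x i‖ ≤ C) :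
    vnorm2 (Dmat P *ᵥ x) ≤ √(P.card : ℝ) * C := by
  have h_sum : ∑ i ∈ P, ‖x i‖ ^ 2 ≤ P.card * C ^ 2 := by
    simpa using Finset.sum_le_card_nsmul P _ _ fun i hi =>
      pow_le_pow_left₀ (norm_nonneg _) (hx i hi) 2
  rw [vnorm2_Dmat_mulVec, ← Real.sqrt_sq hC, ← Real.sqrt_mul (Nat.cast_nonneg _)]
  exact Real.sqrt_le_sqrt h_sum

lemma norm_mulVec_Dmat_mulVec_apply_le {M : Matrix (Fin m) (Fin m) ℂ} {μ : ℝ}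
    (hμ : 0 ≤ μ) (hM : ∀ i j, ‖M i j‖ ≤ μ) (Q : Finset (Fin m)) (x : Fin m → ℂ)
    (i : Fin m) :
    ‖(M *ᵥ (Dmat Q *ᵥ x)) i‖ ≤ μ * √(Q.card : ℝ) * vnorm2 x := by
  have h_l1 : ∑ j, ‖(Dmat Q *ᵥ x) j‖ = ∑ j ∈ Q, ‖x j‖ := by
    simp only [Dmat_mulVec_apply, apply_ite, norm_zero, Finset.sum_ite_mem, Finset.univ_inter]
  calc ‖(M *ᵥ (Dmat Q *ᵥ x)) i‖
      ≤ ∑ j, ‖M i j‖ * ‖(Dmat Q *ᵥ x) j‖ := by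
        simpa only [Matrix.mulVec, dotProduct, norm_mul] using
          norm_sum_le Finset.univ fun j => M i j * (Dmat Q *ᵥ x) j
    _ ≤ ∑ j, μ * ‖(Dmat Q *ᵥ x) j‖ := by gcongr; exact hM i _
    _ = μ * ∑ j ∈ Q, ‖x j‖ := by rw [← Finset.mul_sum, h_l1]
    _ ≤ μ * (√(Q.card : ℝ) * vnorm2 x) := by
        gcongr
        exact sum_norm_le_sqrt_card_mul_vnorm2 Q x
    _ = μ * √(Q.card : ℝ) * vnorm2 x := by ring

lemma vnorm2_Dmat_mulVec_mulVec_Dmat_mulVec_le {M : Matrix (Fin m) (Fin m) ℂ} {μ : ℝ}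
    (hμ : 0 ≤ μ) (hM : ∀ i j, ‖M i j‖ ≤ μ) (P Q : Finset (Fin m)) (x : Fin m → ℂ) :
    vnorm2 (Dmat P *ᵥ (M *ᵥ (Dmat Q *ᵥ x))) ≤
      μ * √(P.card : ℝ) * √(Q.card : ℝ) * vnorm2 x := by
  have hC : 0 ≤ μ * √(Q.card : ℝ) * vnorm2 x :=
    mul_nonneg (mul_nonneg hμ (Real.sqrt_nonneg _)) (Real.sqrt_nonneg _)
  calc vnorm2 (Dmat P *ᵥ (M *ᵥ (Dmat Q *ᵥ x)))
      ≤ √(P.card : ℝ) * (μ * √(Q.card : ℝ) * vnorm2 x) :=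
        vnorm2_Dmat_mulVec_le_of_norm_le P hC fun i _ =>
          norm_mulVec_Dmat_mulVec_apply_le hμ hM Q x i
    _ = μ * √(P.card : ℝ) * √(Q.card : ℝ) * vnorm2 x := by ring

end Dmat

lemma one_sub_le_mul_sqrt_card_of_mulVec_eq {m : ℕ} {U : Matrix (Fin m) (Fin m) ℂ}
    (hU : U ∈ Matrix.unitaryGroup (Fin m) ℂ) {μ : ℝ} (hμ : 0 ≤ μ)
    (hUμ : ∀ i j, ‖U i j‖ ≤ μ) (P Q : Finset (Fin m)) {εP εQ : ℝ} {p q : Fin m → ℂ}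
    (hp0 : p ≠ 0) (hpq : p = U *ᵥ q)
    (hpc : vnorm2 (p - Dmat P *ᵥ p) ≤ εP * vnorm2 p)
    (hqc : vnorm2 (q - Dmat Q *ᵥ q) ≤ εQ * vnorm2 q) :
    1 - εP - εQ ≤ μ * √(P.card : ℝ) * √(Q.card : ℝ) := by
  have hqp : vnorm2 q = vnorm2 p := by rw [hpq, vnorm2_unitary_mulVec hU]
  have h_split : p = Dmat P *ᵥ (U *ᵥ (Dmat Q *ᵥ q))
      + Dmat P *ᵥ (U *ᵥ (q - Dmat Q *ᵥ q)) + (p - Dmat P *ᵥ p) := by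
    rw [← Matrix.mulVec_add, ← Matrix.mulVec_add, add_sub_cancel, ← hpq, add_sub_cancel]
  have h_le : vnorm2 p ≤ (μ * √(P.card : ℝ) * √(Q.card : ℝ) + εQ + εP) * vnorm2 p :=
    calc vnorm2 p
        ≤ vnorm2 (Dmat P *ᵥ (U *ᵥ (Dmat Q *ᵥ q)))
          + vnorm2 (Dmat P *ᵥ (U *ᵥ (q - Dmat Q *ᵥ q))) + vnorm2 (p - Dmat P *ᵥ p) := by
          conv_lhs => rw [h_split]
          exact (vnorm2_add_le _ _).trans (add_le_add_left (vnorm2_add_le _ _) _)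
      _ ≤ μ * √(P.card : ℝ) * √(Q.card : ℝ) * vnorm2 q
          + vnorm2 (U *ᵥ (q - Dmat Q *ᵥ q)) + εP * vnorm2 p := by
          gcongr
          · exact vnorm2_Dmat_mulVec_mulVec_Dmat_mulVec_le hμ hUμ P Q q
          · exact vnorm2_Dmat_mulVec_le P _
      _ ≤ μ * √(P.card : ℝ) * √(Q.card : ℝ) * vnorm2 q + εQ * vnorm2 q
          + εP * vnorm2 p := by
          rw [vnorm2_unitary_mulVec hU]
          gcongr
      _ = (μ * √(P.card : ℝ) * √(Q.card : ℝ) + εQ + εP) * vnorm2 p := by rw [hqp]; ring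
  have h_one : 1 ≤ μ * √(P.card : ℝ) * √(Q.card : ℝ) + εQ + εP :=
    le_of_mul_le_mul_right (by rwa [one_mul]) (vnorm2_pos hp0)
  linarith

lemma eq_conjTranspose_mul_mulVec_of_mulVec_eq {m : ℕ} {A : Matrix (Fin m) (Fin m) ℂ}
    (hA : A ∈ Matrix.unitaryGroup (Fin m) ℂ) (B : Matrix (Fin m) (Fin m) ℂ)
    {p q : Fin m → ℂ} (hpq : A *ᵥ p = B *ᵥ q) : p = (Aᴴ * B) *ᵥ q := by
  rw [← Matrix.mulVec_mulVec, ← hpq, Matrix.mulVec_mulVec, ← Matrix.star_eq_conjTranspose,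
    Unitary.star_mul_self_of_mem hA, Matrix.one_mulVec]

theorem stmt8_general {m : ℕ} (A B : Matrix (Fin m) (Fin m) ℂ)
    (hA : A ∈ Matrix.unitaryGroup (Fin m) ℂ) (hB : B ∈ Matrix.unitaryGroup (Fin m) ℂ)
    (P Q : Finset (Fin m))
    (εP εQ : ℝ)
    (μ : ℝ) (hμ : IsGreatest {x | ∃ i j, x = ‖(Aᴴ * B) i j‖} μ)
    (p q : Fin m → ℂ) (hp0 : p ≠ 0) (hpq : A.mulVec p = B.mulVec q)
    (hpc : vnorm2 (p - (Dmat P).mulVec p) ≤ εP * vnorm2 p)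
    (hqc : vnorm2 (q - (Dmat Q).mulVec q) ≤ εQ * vnorm2 q) :
    ((P.card : ℝ) * Q.card) ≥ (max (1 - εP - εQ) 0) ^ 2 / μ ^ 2 := by
  have hM : Aᴴ * B ∈ Matrix.unitaryGroup (Fin m) ℂ := by
    rw [← Matrix.star_eq_conjTranspose]
    exact mul_mem (Unitary.star_mem hA) hB
  have hMμ : ∀ i j, ‖(Aᴴ * B) i j‖ ≤ μ := fun i j => hμ.2 ⟨i, j, rfl⟩
  have hμ0 : 0 ≤ μ := by
    obtain ⟨i, j, hij⟩ := hμ.1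
    exact hij ▸ norm_nonneg _
  have h_key := one_sub_le_mul_sqrt_card_of_mulVec_eq hM hμ0 hMμ P Q hp0
    (eq_conjTranspose_mul_mulVec_of_mulVec_eq hA B hpq) hpc hqc
  rcases le_total (1 - εP - εQ) 0 with h | h
  · rw [max_eq_right h, zero_pow two_ne_zero, zero_div]
    positivity
  · rw [max_eq_left h, ge_iff_le]
    refine div_le_of_le_mul₀ (sq_nonneg _) (by positivity) ?_
    calc (1 - εP - εQ) ^ 2 ≤ (μ * √(P.card : ℝ) * √(Q.card : ℝ)) ^ 2 := by gcongr
      _ = P.card * Q.card * μ ^ 2 := by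
        rw [mul_pow, mul_pow, Real.sq_sqrt (Nat.cast_nonneg _), Real.sq_sqrt (Nat.cast_nonneg _)]
        ring

theorem stmt8 {m : ℕ} (A B : Matrix (Fin m) (Fin m) ℂ)
    (hA : A ∈ Matrix.unitaryGroup (Fin m) ℂ) (hB : B ∈ Matrix.unitaryGroup (Fin m) ℂ)
    (P Q : Finset (Fin m))
    (εP εQ : ℝ) (hεP : εP ∈ Set.Icc (0 : ℝ) 1) (hεQ : εQ ∈ Set.Icc (0 : ℝ) 1)
    (μ : ℝ) (hμ : IsGreatest {x | ∃ i j, x = ‖(Aᴴ * B) i j‖} μ)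
    (p q : Fin m → ℂ) (hp0 : p ≠ 0) (hq0 : q ≠ 0) (hpq : A.mulVec p = B.mulVec q)
    (hpc : vnorm2 (p - (Dmat P).mulVec p) ≤ εP * vnorm2 p)
    (hqc : vnorm2 (q - (Dmat Q).mulVec q) ≤ εQ * vnorm2 q) :
    ((P.card : ℝ) * Q.card) ≥ (max (1 - εP - εQ) 0) ^ 2 / μ ^ 2 :=
  stmt8_general A B hA hB P Q εP εQ μ hμ p q hp0 hpq hpc hqc
end

section
/- Let A, B ∈ ℂ^{m×m} be unitary and suppose A p = B q for nonzero vectors p, q ∈ ℂ^m. Then ‖p‖₀ · ‖q‖₀ ≥ 1/μ², where ‖·‖₀ counts nonzero entries and μ = max_{i,j} |a_i* b_j| is the mutual coherence of the columns of A and B. -/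
open scoped BigOperators Matrix

noncomputable def norm0 {m : ℕ} (x : Fin m → ℂ) : ℕ :=
  (Finset.univ.filter (fun i => x i ≠ 0)).card

/-!
Unitarity turns `A p = B q` into `p = M q` and `q = Mᴴ p` for `M = Aᴴ B`, whose entries are
bounded by `μ`. Hence `‖p‖₂² ≤ ‖p‖₁ ‖p‖_∞ ≤ μ ‖p‖₁ ‖q‖₁`, and symmetrically for `q`. Multiplying
the two bounds and using Cauchy–Schwarz on the supports, `‖x‖₁² ≤ ‖x‖₀ ‖x‖₂²`, gives
`‖p‖₂² ‖q‖₂² ≤ μ² ‖p‖₀ ‖q‖₀ ‖p‖₂² ‖q‖₂²`.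
-/

lemma sq_sum_norm_le_norm0_mul_sum_norm_sq {m : ℕ} (x : Fin m → ℂ) :
    (∑ i, ‖x i‖) ^ 2 ≤ norm0 x * ∑ i, ‖x i‖ ^ 2 := by
  set s := Finset.univ.filter (fun i => x i ≠ 0)
  have hsupp : ∑ i, ‖x i‖ = ∑ i ∈ s, ‖x i‖ :=
    (Finset.sum_filter_of_ne fun i _ h => by simpa using h).symm
  calc (∑ i, ‖x i‖) ^ 2 = (∑ i ∈ s, ‖x i‖) ^ 2 := by rw [hsupp]
    _ ≤ s.card * ∑ i ∈ s, ‖x i‖ ^ 2 := sq_sum_le_card_mul_sum_sq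
    _ ≤ norm0 x * ∑ i, ‖x i‖ ^ 2 :=
      mul_le_mul_of_nonneg_left (Finset.sum_le_sum_of_subset_of_nonneg (Finset.subset_univ s)
        fun i _ _ => by positivity) (Nat.cast_nonneg _)

section EntrywiseBound

variable {ι κ 𝕜 : Type*} [Fintype κ] [SeminormedRing 𝕜]
  {M : Matrix ι κ 𝕜} {μ : ℝ}

lemma norm_mulVec_apply_le (hM : ∀ i j, ‖M i j‖ ≤ μ) (q : κ → 𝕜) (i : ι) :
    ‖(M *ᵥ q) i‖ ≤ μ * ∑ j, ‖q j‖ :=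
  calc ‖∑ j, M i j * q j‖ ≤ ∑ j, ‖M i j‖ * ‖q j‖ :=
        (norm_sum_le _ _).trans (Finset.sum_le_sum fun j _ => norm_mul_le _ _)
    _ ≤ ∑ j, μ * ‖q j‖ := by gcongr; exact hM i j
    _ = μ * ∑ j, ‖q j‖ := Finset.mul_sum .. |>.symm

lemma sum_norm_sq_mulVec_le [Fintype ι] (hM : ∀ i j, ‖M i j‖ ≤ μ) (q : κ → 𝕜) :
    ∑ i, ‖(M *ᵥ q) i‖ ^ 2 ≤ μ * (∑ i, ‖(M *ᵥ q) i‖) * ∑ j, ‖q j‖ :=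
  calc ∑ i, ‖(M *ᵥ q) i‖ ^ 2 ≤ ∑ i, ‖(M *ᵥ q) i‖ * (μ * ∑ j, ‖q j‖) := by
        gcongr with i
        rw [sq]
        exact mul_le_mul_of_nonneg_left (norm_mulVec_apply_le hM q i) (norm_nonneg _)
    _ = μ * (∑ i, ‖(M *ᵥ q) i‖) * ∑ j, ‖q j‖ := by rw [← Finset.sum_mul]; ring

end EntrywiseBound

lemma sum_norm_sq_pos {ι E : Type*} [Fintype ι] [NormedAddCommGroup E] {x : ι → E}
    (hx : x ≠ 0) : 0 < ∑ i, ‖x i‖ ^ 2 := by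
  obtain ⟨i, hi⟩ := Function.ne_iff.mp hx
  exact Finset.sum_pos' (fun i _ => by positivity)
    ⟨i, Finset.mem_univ i, pow_pos (norm_pos_iff.mpr hi) 2⟩

lemma one_le_sq_mul_norm0_mul_norm0 {m n : ℕ} {M : Matrix (Fin m) (Fin n) ℂ} {μ : ℝ}
    (hM : ∀ i j, ‖M i j‖ ≤ μ) {p : Fin m → ℂ} {q : Fin n → ℂ} (hp0 : p ≠ 0)
    (hp : p = M *ᵥ q) (hq : q = Mᴴ *ᵥ p) :
    1 ≤ μ ^ 2 * (norm0 p * norm0 q) := by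
  have hMH : ∀ i j, ‖Mᴴ i j‖ ≤ μ := fun i j => by simpa using hM j i
  have hq0 : q ≠ 0 := by rintro rfl; exact hp0 (by simpa using hp)
  set S1p := ∑ i, ‖p i‖
  set S1q := ∑ i, ‖q i‖
  set S2p := ∑ i, ‖p i‖ ^ 2
  set S2q := ∑ i, ‖q i‖ ^ 2
  have hp2 : S2p ≤ μ * S1p * S1q := by
    have := sum_norm_sq_mulVec_le hM q; rwa [← hp] at this
  have hq2 : S2q ≤ μ * S1q * S1p := by
    have := sum_norm_sq_mulVec_le hMH p; rwa [← hq] at this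
  have hS2 : 0 < S2p * S2q := mul_pos (sum_norm_sq_pos hp0) (sum_norm_sq_pos hq0)
  have key : S2p * S2q ≤ μ ^ 2 * (norm0 p * norm0 q) * (S2p * S2q) :=
    calc S2p * S2q ≤ (μ * S1p * S1q) * (μ * S1q * S1p) :=
          mul_le_mul hp2 hq2 (by positivity) (hp2.trans' (by positivity))
      _ = μ ^ 2 * (S1p ^ 2 * S1q ^ 2) := by ring
      _ ≤ μ ^ 2 * ((norm0 p * S2p) * (norm0 q * S2q)) := by
          gcongr
          · exact sq_sum_norm_le_norm0_mul_sum_norm_sq p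
          · exact sq_sum_norm_le_norm0_mul_sum_norm_sq q
      _ = μ ^ 2 * (norm0 p * norm0 q) * (S2p * S2q) := by ring
  exact le_of_mul_le_mul_right (by simpa using key) hS2

lemma eq_conjTranspose_mul_mulVec {n R : Type*} [Fintype n] [DecidableEq n] [CommRing R]
    [StarRing R] {A B : Matrix n n R} (hA : A ∈ Matrix.unitaryGroup n R) {p q : n → R} (hpq : A *ᵥ p = B *ᵥ q) :
    p = (Aᴴ * B) *ᵥ q := by
  rw [← Matrix.mulVec_mulVec, ← hpq, Matrix.mulVec_mulVec, ← Matrix.star_eq_conjTranspose,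
    Matrix.mem_unitaryGroup_iff'.mp hA, Matrix.one_mulVec]

theorem stmt9_general {m : ℕ} (A B : Matrix (Fin m) (Fin m) ℂ)
    (hA : A ∈ Matrix.unitaryGroup (Fin m) ℂ) (hB : B ∈ Matrix.unitaryGroup (Fin m) ℂ)
    (μ : ℝ) (hμ : IsGreatest {x | ∃ i j, x = ‖(Aᴴ * B) i j‖} μ)
    (p q : Fin m → ℂ) (hp0 : p ≠ 0) (hpq : A.mulVec p = B.mulVec q) :
    ((norm0 p : ℝ) * norm0 q) ≥ 1 / μ ^ 2 := by
  have hq : q = (Aᴴ * B)ᴴ *ᵥ p := by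
    rw [Matrix.conjTranspose_mul, Matrix.conjTranspose_conjTranspose]
    exact eq_conjTranspose_mul_mulVec hB hpq.symm
  have h1 := one_le_sq_mul_norm0_mul_norm0 (fun i j => hμ.2 ⟨i, j, rfl⟩) hp0
    (eq_conjTranspose_mul_mulVec hA hpq) hq
  have hμ2 : 0 < μ ^ 2 :=
    (sq_nonneg μ).lt_of_ne fun h => by rw [← h, zero_mul] at h1; norm_num at h1
  rw [ge_iff_le, div_le_iff₀ hμ2, mul_comm]
  exact h1

theorem stmt9 {m : ℕ} (A B : Matrix (Fin m) (Fin m) ℂ)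
    (hA : A ∈ Matrix.unitaryGroup (Fin m) ℂ) (hB : B ∈ Matrix.unitaryGroup (Fin m) ℂ)
    (μ : ℝ) (hμ : IsGreatest {x | ∃ i j, x = ‖(Aᴴ * B) i j‖} μ)
    (p q : Fin m → ℂ) (hp0 : p ≠ 0) (hq0 : q ≠ 0) (hpq : A.mulVec p = B.mulVec q) :
    ((norm0 p : ℝ) * norm0 q) ≥ 1 / μ ^ 2 :=
  stmt9_general A B hA hB μ hμ p q hp0 hpq
end

section
/- Let U ∈ ℂ^{m×m} be unitary and P, Q ⊆ {1,…,m}. Then ‖D_P U D_Q U*‖_{1→1} ≤ |P|·|Q|·μ², where μ = max_{k,l}|U_{k,l}|. -/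
open scoped BigOperators Matrix

/-
The 1 → 1 norm of a matrix is at most its largest absolute column sum. The columns of
D_P U D_Q U* have at most |P| nonzero entries, and each entry (U D_Q U*)_{ij} = ∑_{k ∈ Q} U_{ik} conj(U_{jk})
has modulus at most |Q| μ².
-/

lemma vnorm1_mulVec_le {m n : ℕ} (A : Matrix (Fin m) (Fin n) ℂ) (x : Fin n → ℂ) {C : ℝ}
    (hA : ∀ j, ∑ i, ‖A i j‖ ≤ C) : vnorm1 (A *ᵥ x) ≤ C * vnorm1 x :=
  calc vnorm1 (A *ᵥ x) = ∑ i, ‖∑ j, A i j * x j‖ := rfl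
    _ ≤ ∑ i, ∑ j, ‖A i j‖ * ‖x j‖ :=
        Finset.sum_le_sum fun i _ => (norm_sum_le _ _).trans_eq (by simp only [norm_mul])
    _ = ∑ j, (∑ i, ‖A i j‖) * ‖x j‖ := by rw [Finset.sum_comm]; simp only [Finset.sum_mul]
    _ ≤ ∑ j, C * ‖x j‖ := by gcongr with j; exact hA j
    _ = C * vnorm1 x := by rw [vnorm1, Finset.mul_sum]

lemma opnorm1_le_of_sum_norm_le {m n : ℕ} (A : Matrix (Fin m) (Fin n) ℂ) {C : ℝ} (hC : 0 ≤ C)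
    (hA : ∀ j, ∑ i, ‖A i j‖ ≤ C) : opnorm1 A ≤ C := by
  refine Real.sSup_le ?_ hC
  rintro _ ⟨x, hx, rfl⟩
  simpa [hx] using vnorm1_mulVec_le A x hA

lemma Dmat_mul_apply {m n : ℕ} (P : Finset (Fin m)) (A : Matrix (Fin m) (Fin n) ℂ)
    (i : Fin m) (j : Fin n) : (Dmat P * A) i j = if i ∈ P then A i j else 0 := by
  simp [Dmat, Matrix.diagonal_mul]

lemma mul_Dmat_apply {m n : ℕ} (A : Matrix (Fin n) (Fin m) ℂ) (Q : Finset (Fin m))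
    (i : Fin n) (j : Fin m) : (A * Dmat Q) i j = if j ∈ Q then A i j else 0 := by
  simp [Dmat, Matrix.mul_diagonal]

lemma opnorm1_Dmat_mul_le {m n : ℕ} (P : Finset (Fin m)) (B : Matrix (Fin m) (Fin n) ℂ)
    {c : ℝ} (hc : 0 ≤ c) (hB : ∀ i j, ‖B i j‖ ≤ c) : opnorm1 (Dmat P * B) ≤ P.card * c := by
  refine opnorm1_le_of_sum_norm_le _ (by positivity) fun j => ?_
  calc ∑ i, ‖(Dmat P * B) i j‖ = ∑ i ∈ P, ‖B i j‖ := by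
        simp only [Dmat_mul_apply, apply_ite, norm_zero, Finset.sum_ite_mem, Finset.univ_inter]
    _ ≤ ∑ _i ∈ P, c := Finset.sum_le_sum fun i _ => hB i j
    _ = P.card * c := by rw [Finset.sum_const, nsmul_eq_mul]

lemma norm_mul_Dmat_mul_conjTranspose_apply_le {m n : ℕ} (U : Matrix (Fin n) (Fin m) ℂ)
    (Q : Finset (Fin m)) {μ : ℝ} (hU : ∀ k l, ‖U k l‖ ≤ μ) (i j : Fin n) :
    ‖(U * Dmat Q * Uᴴ) i j‖ ≤ Q.card * μ ^ 2 := by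
  have hentry : (U * Dmat Q * Uᴴ) i j = ∑ k ∈ Q, U i k * star (U j k) := by
    rw [Matrix.mul_apply]
    simp only [mul_Dmat_apply, Matrix.conjTranspose_apply, ite_mul, zero_mul,
      Finset.sum_ite_mem, Finset.univ_inter]
  calc ‖(U * Dmat Q * Uᴴ) i j‖ ≤ ∑ k ∈ Q, ‖U i k‖ * ‖U j k‖ := by
        rw [hentry]
        exact (norm_sum_le _ _).trans_eq (by simp only [norm_mul, norm_star])
    _ ≤ ∑ _k ∈ Q, μ ^ 2 := Finset.sum_le_sum fun k _ => by
        rw [sq]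
        exact mul_le_mul (hU i k) (hU j k) (norm_nonneg _) ((norm_nonneg _).trans (hU i k))
    _ = Q.card * μ ^ 2 := by rw [Finset.sum_const, nsmul_eq_mul]

theorem stmt12_general {m : ℕ} (U : Matrix (Fin m) (Fin m) ℂ)
    (P Q : Finset (Fin m)) (μ : ℝ)
    (hμ : IsGreatest {x | ∃ k l, x = ‖U k l‖} μ) :
    opnorm1 (Dmat P * (U * Dmat Q * Uᴴ)) ≤ (P.card : ℝ) * Q.card * μ ^ 2 := by
  have hU : ∀ k l, ‖U k l‖ ≤ μ := fun k l => hμ.2 ⟨k, l, rfl⟩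
  calc opnorm1 (Dmat P * (U * Dmat Q * Uᴴ)) ≤ P.card * (Q.card * μ ^ 2) :=
        opnorm1_Dmat_mul_le P _ (by positivity) (norm_mul_Dmat_mul_conjTranspose_apply_le U Q hU)
    _ = P.card * Q.card * μ ^ 2 := (mul_assoc _ _ _).symm

theorem stmt12 {m : ℕ} (U : Matrix (Fin m) (Fin m) ℂ)
    (hU : U ∈ Matrix.unitaryGroup (Fin m) ℂ) (P Q : Finset (Fin m)) (μ : ℝ)
    (hμ : IsGreatest {x | ∃ k l, x = ‖U k l‖} μ) :
    opnorm1 (Dmat P * (U * Dmat Q * Uᴴ)) ≤ (P.card : ℝ) * Q.card * μ ^ 2 :=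
  stmt12_general U P Q μ hμ
end

section
/- Let A ∈ ℂ^{m×p} and B ∈ ℂ^{m×q} have all columns of unit Euclidean norm, with coherences μ(A) = max_{i≠j}|a_i* a_j|, μ(B) analogously, and mutual coherence μ̄ = max_{i,j}|a_i* b_j|. If A p = B q for vectors p ∈ ℂ^p, q ∈ ℂ^q, then for every subset P ⊆ {1,…,p}: ‖D_P p‖₁ ≤ |P| · (μ(A)‖p‖₁ + μ̄‖q‖₁) / (1 + μ(A)). -/
open scoped BigOperators Matrix

/-! Multiplying `A p = B q` by `Aᴴ` gives `(AᴴA) p = (AᴴB) q`. Since `AᴴA` has unit diagonal,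
row `i` reads `p i = (AᴴB q) i - ∑_{j ≠ i} (AᴴA) i j * p j`, so
`‖p i‖ ≤ μbar ‖q‖₁ + μA (‖p‖₁ - ‖p i‖)`. Summing this bound over `i ∈ P` gives the claim. -/

theorem norm_sum_mul_le_of_forall_norm_le {ι R : Type*} [NormedRing R] {s : Finset ι}
    {a p : ι → R} {μ : ℝ} (ha : ∀ j ∈ s, ‖a j‖ ≤ μ) :
    ‖∑ j ∈ s, a j * p j‖ ≤ μ * ∑ j ∈ s, ‖p j‖ :=
  calc ‖∑ j ∈ s, a j * p j‖ ≤ ∑ j ∈ s, ‖a j‖ * ‖p j‖ :=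
        (norm_sum_le _ _).trans (Finset.sum_le_sum fun _ _ => norm_mul_le _ _)
    _ ≤ ∑ j ∈ s, μ * ‖p j‖ :=
        Finset.sum_le_sum fun j hj => mul_le_mul_of_nonneg_right (ha j hj) (norm_nonneg _)
    _ = μ * ∑ j ∈ s, ‖p j‖ := (Finset.mul_sum _ _ _).symm

theorem one_add_mul_norm_le_of_mulVec_apply_eq {ι κ R : Type*} [Fintype ι] [DecidableEq ι]
    [Fintype κ] [NormedRing R] {G : Matrix ι ι R} {H : Matrix ι κ R} {p : ι → R} {q : κ → R}
    {μ ν : ℝ} {i : ι} (hdiag : G i i = 1) (hG : ∀ j, j ≠ i → ‖G i j‖ ≤ μ)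
    (hH : ∀ j, ‖H i j‖ ≤ ν) (heq : (G *ᵥ p) i = (H *ᵥ q) i) :
    (1 + μ) * ‖p i‖ ≤ μ * ∑ j, ‖p j‖ + ν * ∑ j, ‖q j‖ := by
  have hsplit : (G *ᵥ p) i = p i + ∑ j ∈ Finset.univ.erase i, G i j * p j := by
    rw [Matrix.mulVec, dotProduct, ← Finset.add_sum_erase _ _ (Finset.mem_univ i), hdiag,
      one_mul]
  have hpi : p i = (H *ᵥ q) i - ∑ j ∈ Finset.univ.erase i, G i j * p j := by
    rw [← heq, hsplit, add_sub_cancel_right]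
  have hHq : ‖(H *ᵥ q) i‖ ≤ ν * ∑ j, ‖q j‖ :=
    norm_sum_mul_le_of_forall_norm_le fun j _ => hH j
  have hGp : ‖∑ j ∈ Finset.univ.erase i, G i j * p j‖ ≤ μ * (∑ j, ‖p j‖ - ‖p i‖) := by
    rw [← Finset.sum_erase_eq_sub (Finset.mem_univ i)]
    exact norm_sum_mul_le_of_forall_norm_le fun j hj => hG j (Finset.ne_of_mem_erase hj)
  have hpi_le : ‖p i‖ ≤ ‖(H *ᵥ q) i‖ + ‖∑ j ∈ Finset.univ.erase i, G i j * p j‖ :=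
    hpi ▸ norm_sub_le _ _
  linarith

theorem conjTranspose_mul_self_apply_self {m : ℕ} {ι : Type*} (A : Matrix (Fin m) ι ℂ) (j : ι) :
    (Aᴴ * A) j j = ((vnorm2 fun i => A i j) ^ 2 : ℝ) := by
  rw [vnorm2, Real.sq_sqrt (Finset.sum_nonneg fun _ _ => sq_nonneg _), Matrix.mul_apply]
  push_cast
  refine Finset.sum_congr rfl fun k _ => ?_
  rw [Matrix.conjTranspose_apply, Complex.star_def, mul_comm, Complex.mul_conj,
    Complex.normSq_eq_norm_sq]
  push_cast
  rfl

theorem vnorm1_Dmat_mulVec {n : ℕ} (P : Finset (Fin n)) (v : Fin n → ℂ) :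
    vnorm1 ((Dmat P).mulVec v) = ∑ i ∈ P, ‖v i‖ := by
  simp only [vnorm1, Dmat, Matrix.mulVec_diagonal, ite_mul, one_mul, zero_mul, apply_ite norm,
    norm_zero, Finset.sum_ite_mem, Finset.univ_inter]

theorem stmt14_general {m p q : ℕ} (A : Matrix (Fin m) (Fin p) ℂ) (B : Matrix (Fin m) (Fin q) ℂ)
    (hcolA : ∀ j, vnorm2 (fun i => A i j) = 1)
    (μA μbar : ℝ)
    (hμA : IsGreatest {x | ∃ i j, i ≠ j ∧ x = ‖(Aᴴ * A) i j‖} μA)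
    (hμbar : IsGreatest {x | ∃ i j, x = ‖(Aᴴ * B) i j‖} μbar)
    (pv : Fin p → ℂ) (qv : Fin q → ℂ) (h : A.mulVec pv = B.mulVec qv)
    (P : Finset (Fin p)) :
    vnorm1 ((Dmat P).mulVec pv)
      ≤ (P.card : ℝ) * (μA * vnorm1 pv + μbar * vnorm1 qv) / (1 + μA) := by
  obtain ⟨⟨i₀, j₀, -, hμA_eq⟩, hμA_ub⟩ := hμA
  have hpos : 0 < 1 + μA := by linarith [hμA_eq ▸ norm_nonneg ((Aᴴ * A) i₀ j₀)]
  have hentry : ∀ i, ‖pv i‖ ≤ (μA * vnorm1 pv + μbar * vnorm1 qv) / (1 + μA) := fun i => by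
    rw [le_div_iff₀' hpos]
    refine one_add_mul_norm_le_of_mulVec_apply_eq (i := i) ?_
      (fun j hj => hμA_ub ⟨i, j, hj.symm, rfl⟩) (fun j => hμbar.2 ⟨i, j, rfl⟩) ?_
    · rw [conjTranspose_mul_self_apply_self, hcolA]; norm_num
    · rw [← Matrix.mulVec_mulVec, ← Matrix.mulVec_mulVec, h]
  calc vnorm1 ((Dmat P).mulVec pv) = ∑ i ∈ P, ‖pv i‖ := vnorm1_Dmat_mulVec P pv
    _ ≤ ∑ _i ∈ P, (μA * vnorm1 pv + μbar * vnorm1 qv) / (1 + μA) :=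
        Finset.sum_le_sum fun i _ => hentry i
    _ = _ := by rw [Finset.sum_const, nsmul_eq_mul, mul_div_assoc]

theorem stmt14 {m p q : ℕ} (A : Matrix (Fin m) (Fin p) ℂ) (B : Matrix (Fin m) (Fin q) ℂ)
    (hcolA : ∀ j, vnorm2 (fun i => A i j) = 1) (hcolB : ∀ j, vnorm2 (fun i => B i j) = 1)
    (μA μbar : ℝ)
    (hμA : IsGreatest {x | ∃ i j, i ≠ j ∧ x = ‖(Aᴴ * A) i j‖} μA)
    (hμbar : IsGreatest {x | ∃ i j, x = ‖(Aᴴ * B) i j‖} μbar)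
    (pv : Fin p → ℂ) (qv : Fin q → ℂ) (h : A.mulVec pv = B.mulVec qv)
    (P : Finset (Fin p)) :
    vnorm1 ((Dmat P).mulVec pv)
      ≤ (P.card : ℝ) * (μA * vnorm1 pv + μbar * vnorm1 qv) / (1 + μA) :=
  stmt14_general A B hcolA μA μbar hμA hμbar pv qv h P
end
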